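/- Let k be an algebraically closed field. If A is the path algebra over k of a finite quiver whose underlying graph is a tree, or the incidence algebra over k of a finite partially ordered set, then A has only finitely many two-sided ideals. -/

import Mathlib

set_option maxHeartbeats 1000000
set_option synthInstance.maxHeartbeats 400000

namespace DPF

open Matrix

/-- A finite quiver on `Fin n` (given by an arrow relation, no loops, no two-cycles)
whose underlying (undirected simple) graph is a tree. -/
structure TreeQuiver (n : ℕ) : Type where
  arr : Fin n → Fin n → Prop
  loopless : ∀ i, ¬ arr i i
  oneway : ∀ i j, arr i j → ¬ arr j i
  isTree : (SimpleGraph.fromRel arr).IsTree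

namespace TreeQuiver

variable {n : ℕ}

/-- The underlying simple graph of the quiver. -/
def G (Q : TreeQuiver n) : SimpleGraph (Fin n) := SimpleGraph.fromRel Q.arr

/-- `Q.Reach i j` : `j` is a successor of `i`, i.e. there is an oriented
(possibly trivial) path from `i` to `j`. -/
def Reach (Q : TreeQuiver n) (i j : Fin n) : Prop := Relation.ReflTransGen Q.arr i j

/-- `i` is a sink (no outgoing arrows). -/
def IsSink (Q : TreeQuiver n) (i : Fin n) : Prop := ∀ j, ¬ Q.arr i j

/-- `i` is a source (no incoming arrows). -/
def IsSource (Q : TreeQuiver n) (i : Fin n) : Prop := ∀ j, ¬ Q.arr j i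

/-- The degree of a vertex in the underlying graph. -/
noncomputable def deg (Q : TreeQuiver n) (i : Fin n) : ℕ := {j | Q.G.Adj i j}.ncard

/-- `i ∈ K(Q)`: `i` is a sink or a source. -/
def inK (Q : TreeQuiver n) (i : Fin n) : Prop := Q.IsSink i ∨ Q.IsSource i

/-- `i ∈ K'(Q)`: a sink or a source of degree at least 2. -/
def inK' (Q : TreeQuiver n) (i : Fin n) : Prop := Q.inK i ∧ 2 ≤ Q.deg i

/-- `Q` is admissible: all vertices of degree at least 3 are sinks or sources. -/
def Admissible (Q : TreeQuiver n) : Prop := ∀ i, 3 ≤ Q.deg i → Q.inK i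

/-- A maximal chain of `Q` is (the oriented path between) a pair `(s, t)` where `s` is a
source, `t` is a sink, and `t` is reachable from `s`. -/
def IsMaxChain (Q : TreeQuiver n) (s t : Fin n) : Prop :=
  Q.IsSource s ∧ Q.IsSink t ∧ Q.Reach s t

/-- The vertex set of a chain from `s` to `t`. -/
def chainSet (Q : TreeQuiver n) (s t : Fin n) : Set (Fin n) := {v | Q.Reach s v ∧ Q.Reach v t}

/-- The vertex set of the union of a collection `S` of (maximal) chains, i.e. of the
corresponding "support" subgraph. -/
def suppVerts (Q : TreeQuiver n) (S : Set (Fin n × Fin n)) : Set (Fin n) :=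
  {v | ∃ c ∈ S, v ∈ Q.chainSet c.1 c.2}

/-- The adjacency relation of the subgraph given by the union of the chains in `S`. -/
def suppAdj (Q : TreeQuiver n) (S : Set (Fin n × Fin n)) (i j : Fin n) : Prop :=
  Q.G.Adj i j ∧ ∃ c ∈ S, i ∈ Q.chainSet c.1 c.2 ∧ j ∈ Q.chainSet c.1 c.2

/-- The degree of a vertex in the subgraph given by the union of the chains in `S`. -/
noncomputable def suppDeg (Q : TreeQuiver n) (S : Set (Fin n × Fin n)) (i : Fin n) : ℕ :=
  {j | Q.suppAdj S i j}.ncard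

/-- The subgraph given by the union of the chains in `S` is connected. -/
def SuppConnected (Q : TreeQuiver n) (S : Set (Fin n × Fin n)) : Prop :=
  ∀ u ∈ Q.suppVerts S, ∀ v ∈ Q.suppVerts S, Relation.ReflTransGen (Q.suppAdj S) u v

/-- The two unions of (maximal) chains `S`, `T` are equal as subgraphs of `Q`. -/
def SuppEq (Q : TreeQuiver n) (S T : Set (Fin n × Fin n)) : Prop :=
  Q.suppVerts S = Q.suppVerts T ∧ ∀ i j, Q.suppAdj S i j ↔ Q.suppAdj T i j

/-- A path function: `α i` is a successor of `i` or `0` (here: `none`). -/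
def IsPathFun (Q : TreeQuiver n) (α : Fin n → Option (Fin n)) : Prop :=
  ∀ i j, α i = some j → Q.Reach i j

/-- Monotonicity of a path function. -/
def MonotoneFun (Q : TreeQuiver n) (α : Fin n → Option (Fin n)) : Prop :=
  ∀ i j x, Q.Reach j i → α i = some x → ∃ y, α j = some y ∧ Q.Reach y x

/-- The support of a function `α : Q₀ → Q₀ ∪ {0}`: the set of maximal chains containing
some value of `α`. -/
def suppF (Q : TreeQuiver n) (α : Fin n → Option (Fin n)) : Set (Fin n × Fin n) :=
  {c | Q.IsMaxChain c.1 c.2 ∧ ∃ i x, α i = some x ∧ x ∈ Q.chainSet c.1 c.2}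

/-- A special function: a monotone path function with connected support such that any
sink-or-source vertex of the support sent to `0` has degree `1` in the support. -/
def SpecialFun (Q : TreeQuiver n) (α : Fin n → Option (Fin n)) : Prop :=
  Q.IsPathFun α ∧ Q.MonotoneFun α ∧ Q.SuppConnected (Q.suppF α) ∧
    ∀ i, Q.inK i → i ∈ Q.suppVerts (Q.suppF α) → α i = none → Q.suppDeg (Q.suppF α) i = 1

/-- `Q.Gamma s t`: the vertex set of the connected component of `t` in the graph obtained
from `Q` by deleting the vertex `s`. -/
def Gamma (Q : TreeQuiver n) (s t : Fin n) : Set (Fin n) :=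
  {v | Relation.ReflTransGen (fun a b => Q.G.Adj a b ∧ a ≠ s ∧ b ≠ s) t v}

end TreeQuiver

open TreeQuiver

section Algebra

variable {n : ℕ} (Q : TreeQuiver n) (k : Type) [Field k]

/-- The path algebra of the tree quiver `Q` over `k`, realized concretely as the
subalgebra of `Matrix (Fin n) (Fin n) k` of matrices supported on the reachability
relation; the matrix unit in position `(j, i)` corresponds to the unique path
`a_{ji}` from `i` to `j`. -/
def pathAlg : Subalgebra k (Matrix (Fin n) (Fin n) k) where
  carrier := {x | ∀ i j, ¬ Q.Reach j i → x i j = 0}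
  mul_mem' := by
    intro x y hx hy i j hij
    rw [Matrix.mul_apply]
    refine Finset.sum_eq_zero fun m _ => ?_
    by_cases h1 : Q.Reach m i
    · have h2 : ¬ Q.Reach j m := fun h2 => hij (Relation.ReflTransGen.trans h2 h1)
      rw [hy m j h2, mul_zero]
    · rw [hx i m h1, zero_mul]
  one_mem' := by
    intro i j hij
    have hne : i ≠ j := by rintro rfl; exact hij Relation.ReflTransGen.refl
    exact Matrix.one_apply_ne hne
  add_mem' := by
    intro x y hx hy i j hij
    simp only [Matrix.add_apply, hx i j hij, hy i j hij, add_zero]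
  zero_mem' := by intro i j hij; rfl
  algebraMap_mem' := by
    intro r i j hij
    have hne : i ≠ j := by rintro rfl; exact hij Relation.ReflTransGen.refl
    simp [Matrix.algebraMap_matrix_apply, hne]

theorem std_mem (t s : Fin n) (h : Q.Reach s t) :
    Matrix.single t s (1 : k) ∈ pathAlg Q k := by
  intro i j hij
  by_cases h1 : t = i ∧ s = j
  · obtain ⟨rfl, rfl⟩ := h1
    exact absurd h hij
  · simp only [Matrix.single, Matrix.of_apply, if_neg h1]

/-- The path `a_{ts}` from `s` to `t`, as an element of the path algebra
(by convention `0` if `t` is not a successor of `s`). -/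
noncomputable def aEl (t s : Fin n) : pathAlg Q k :=
  haveI := Classical.dec (Q.Reach s t)
  if h : Q.Reach s t then ⟨Matrix.single t s 1, std_mem Q k t s h⟩ else 0

/-- The trivial path `e_i` at the vertex `i`. -/
noncomputable def e (i : Fin n) : pathAlg Q k :=
  ⟨Matrix.single i i 1, std_mem Q k i i Relation.ReflTransGen.refl⟩

/-- `B` is a two-sided ideal of the path algebra, i.e. a sub-bimodule of the regular
`A`-`A`-bimodule `A`. -/
def IsIdeal (B : Submodule k ↥(pathAlg Q k)) : Prop :=
  (∀ a : ↥(pathAlg Q k), ∀ x ∈ B, a * x ∈ B) ∧ (∀ a : ↥(pathAlg Q k), ∀ x ∈ B, x * a ∈ B)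

/-- `B` is an indecomposable sub-bimodule of `A`: a nonzero two-sided ideal which does not
decompose as an (internal) direct sum of two nonzero sub-bimodules. -/
def Indec (B : Submodule k ↥(pathAlg Q k)) : Prop :=
  IsIdeal Q k B ∧ B ≠ ⊥ ∧
    ∀ B1 B2 : Submodule k ↥(pathAlg Q k), IsIdeal Q k B1 → IsIdeal Q k B2 →
      B1 ⊔ B2 = B → B1 ⊓ B2 = ⊥ → B1 = ⊥ ∨ B2 = ⊥

/-- The support of a two-sided ideal `B`: the set of maximal chains `(s, t)` of `Q`
such that `a_{ts} ∈ B`. -/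
def suppB (B : Submodule k ↥(pathAlg Q k)) : Set (Fin n × Fin n) :=
  {c | Q.IsMaxChain c.1 c.2 ∧ aEl Q k c.2 c.1 ∈ B}

/-- The indecomposable projective left module `P_j = A e_j`, as a left ideal of `A`. -/
def Pmod (j : Fin n) : Submodule ↥(pathAlg Q k) ↥(pathAlg Q k) where
  carrier := {x | x * e Q k j = x}
  add_mem' := by
    intro a b ha hb
    show (a + b) * e Q k j = a + b
    rw [add_mul]
    rw [show a * e Q k j = a from ha, show b * e Q k j = b from hb]
  zero_mem' := by
    show (0 : ↥(pathAlg Q k)) * e Q k j = 0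
    rw [zero_mul]
  smul_mem' := by
    intro c x hx
    show (c • x) * e Q k j = c • x
    rw [smul_eq_mul, mul_assoc, show x * e Q k j = x from hx]

/-- `B e_i`, as a left ideal (left `A`-submodule) of `A`; here `B` is a two-sided ideal. -/
def BeiL (B : Submodule k ↥(pathAlg Q k)) (hB : IsIdeal Q k B) (i : Fin n) :
    Submodule ↥(pathAlg Q k) ↥(pathAlg Q k) where
  carrier := {x | x ∈ B ∧ x * e Q k i = x}
  add_mem' := by
    intro a b ha hb
    exact ⟨B.add_mem ha.1 hb.1, by rw [add_mul, ha.2, hb.2]⟩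
  zero_mem' := ⟨B.zero_mem, by rw [zero_mul]⟩
  smul_mem' := by
    intro c x hx
    refine ⟨?_, ?_⟩
    · show c * x ∈ B
      exact hB.1 c x hx.1
    · show (c • x) * e Q k i = c • x
      rw [smul_eq_mul, mul_assoc, hx.2]

/-- A left `A`-submodule `N` of `A` is (zero or) indecomposable. -/
def IndecL (N : Submodule ↥(pathAlg Q k) ↥(pathAlg Q k)) : Prop :=
  N ≠ ⊥ ∧ ∀ N1 N2 : Submodule ↥(pathAlg Q k) ↥(pathAlg Q k),
    N1 ⊔ N2 = N → N1 ⊓ N2 = ⊥ → N1 = ⊥ ∨ N2 = ⊥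

/-- `x` is "the" function `x_B` associated to the indecomposable sub-bimodule `B`:
`x i = none` iff `B e_i = 0`, and `x i = some j` implies `B e_i ≅ P_j` as left `A`-modules. -/
def IsXB (B : Submodule k ↥(pathAlg Q k)) (hB : IsIdeal Q k B) (x : Fin n → Option (Fin n)) :
    Prop :=
  ∀ i, (x i = none ↔ BeiL Q k B hB i = ⊥) ∧
    ∀ j, x i = some j →
      Nonempty (↥(BeiL Q k B hB i) ≃ₗ[↥(pathAlg Q k)] ↥(Pmod Q k j))

/-- The subspace `B_x` of `A` associated to a (special) function `x` : the `k`-linear span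
of all paths `a_{ts}` with `x s ≠ 0` and `t` a successor of `x s`. -/
def Bspan (x : Fin n → Option (Fin n)) : Submodule k ↥(pathAlg Q k) :=
  Submodule.span k {v | ∃ s xs t, x s = some xs ∧ Q.Reach xs t ∧ v = aEl Q k t s}

/-- The two-sided ideal `J_i`: the span of all paths of `Q` except the trivial path `e_i`. -/
def J (i : Fin n) : Submodule k ↥(pathAlg Q k) :=
  Submodule.span k {v | ∃ t s, Q.Reach s t ∧ ¬(t = i ∧ s = i) ∧ v = aEl Q k t s}

/-- The indecomposable direct summand `J_s^{(q)}` of `J_s` corresponding to the connected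
component (of `Q` with `s` deleted) containing the neighbour `t` of `s`: the span of all
paths `a_{pq}` with `p, q ∈ Γ^{(t)} ∪ {s}` other than `e_s`. -/
def Jc (s t : Fin n) : Submodule k ↥(pathAlg Q k) :=
  Submodule.span k {v | ∃ p q, Q.Reach q p ∧ p ∈ Q.Gamma s t ∪ {s} ∧ q ∈ Q.Gamma s t ∪ {s} ∧
    ¬(p = s ∧ q = s) ∧ v = aEl Q k p q}

end Algebra

section Tensor

open TensorProduct

/-- The multiplication map `I ⊗_k J → A` for two `k`-subspaces `I`, `J` of a `k`-algebra `A`. -/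
noncomputable def mulMap (k A : Type) [CommRing k] [Ring A] [Algebra k A]
    (I J : Submodule k A) : (↥I ⊗[k] ↥J) →ₗ[k] A :=
  TensorProduct.lift (LinearMap.compl₁₂ (LinearMap.mul k A) I.subtype J.subtype)

/-- The submodule of `I ⊗_k J` spanned by the "balancing" relators `ba ⊗ d - b ⊗ ad`;
the quotient of `I ⊗_k J` by it is `I ⊗_A J`, so the multiplication map
`I ⊗_A J → A` is injective if and only if the kernel of `mulMap` equals `balRel`. -/
noncomputable def balRel (k A : Type) [CommRing k] [Ring A] [Algebra k A]
    (I J : Submodule k A) : Submodule k (↥I ⊗[k] ↥J) :=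
  Submodule.span k {z | ∃ (b : I) (d : J) (a : A) (h1 : (b : A) * a ∈ I) (h2 : a * (d : A) ∈ J),
    z = (⟨(b : A) * a, h1⟩ : I) ⊗ₜ[k] d - (b ⊗ₜ[k] (⟨a * (d : A), h2⟩ : J))}

end Tensor

end DPF

/-!
Both algebras have a complete set of idempotents `e i` (the trivial paths, resp. the diagonal
units) whose Peirce components `e i * A * e j` are lines `k ∙ u i j`. A two-sided ideal `I`
containing `z` contains each component `e i * z * e j`, a nonzero one spans its line, and
`z = ∑ i j, e i * z * e j`. Hence `I` is determined by the finite set of pairs `(i, j)` with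
`u i j ∈ I`.
-/

section Peirce

variable {k A ι : Type*} [Field k] [Ring A] [Algebra k A] [Fintype ι]

theorem TwoSidedIdeal.mem_of_peirce {e : ι → A} (he : ∑ i, e i = 1) {u : ι → ι → A}
    (hu : ∀ i j z, e i * z * e j ∈ k ∙ u i j) {I J : TwoSidedIdeal A}
    (hIJ : ∀ i j, u i j ∈ I → u i j ∈ J) {z : A} (hz : z ∈ I) : z ∈ J := by
  have hdecomp : z = ∑ i, ∑ j, e i * z * e j := by
    simp only [← Finset.mul_sum, ← Finset.sum_mul, he, one_mul, mul_one]
  rw [hdecomp]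
  refine sum_mem fun i _ => sum_mem fun j _ => ?_
  obtain ⟨c, hc⟩ := Submodule.mem_span_singleton.mp (hu i j z)
  rw [← hc]
  rcases eq_or_ne c 0 with rfl | hc0
  · rw [zero_smul]
    exact J.zero_mem
  have hpeirce : e i * z * e j ∈ I := I.mul_mem_right _ _ (I.mul_mem_left _ _ hz)
  have huI : u i j ∈ I := by
    rw [← hc, Algebra.smul_def] at hpeirce
    have := I.mul_mem_left (algebraMap k A c⁻¹) _ hpeirce
    rwa [← mul_assoc, ← map_mul, inv_mul_cancel₀ hc0, map_one, one_mul] at this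
  rw [Algebra.smul_def]
  exact J.mul_mem_left _ _ (hIJ i j huI)

theorem TwoSidedIdeal.finite_of_peirce {e : ι → A} (he : ∑ i, e i = 1) (u : ι → ι → A)
    (hu : ∀ i j z, e i * z * e j ∈ k ∙ u i j) : Finite (TwoSidedIdeal A) := by
  refine Finite.of_injective (fun I : TwoSidedIdeal A => {p : ι × ι | u p.1 p.2 ∈ I}) ?_
  intro I J hIJ
  have hmem : ∀ i j, u i j ∈ I ↔ u i j ∈ J := fun i j => Set.ext_iff.mp hIJ (i, j)
  exact le_antisymm (fun z => mem_of_peirce he hu fun i j => (hmem i j).mp)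
    (fun z => mem_of_peirce he hu fun i j => (hmem i j).mpr)

end Peirce

theorem IncidenceAlgebra.sum_apply {𝕜 α ι : Type*} [AddCommMonoid 𝕜] [LE α] (s : Finset ι)
    (f : ι → IncidenceAlgebra 𝕜 α) (a b : α) : (∑ i ∈ s, f i) a b = ∑ i ∈ s, f i a b :=
  map_sum (⟨⟨fun g => g a b, rfl⟩, fun _ _ => rfl⟩ : IncidenceAlgebra 𝕜 α →+ 𝕜) f s

namespace DPF

section PathAlgebra

variable {n : ℕ} (Q : TreeQuiver n) (k : Type) [Field k]

theorem sum_e_eq_one : ∑ i, e Q k i = 1 := by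
  apply Subtype.ext
  simp only [AddSubmonoidClass.coe_finsetSum]
  exact Matrix.sum_single_one

theorem e_mul_mul_e (z : pathAlg Q k) (t s : Fin n) :
    e Q k t * z * e Q k s = (z : Matrix (Fin n) (Fin n) k) t s • aEl Q k t s := by
  apply Subtype.ext
  change Matrix.single t t 1 * (z : Matrix (Fin n) (Fin n) k) * Matrix.single s s 1 = _
  rw [Matrix.single_mul_mul_single, one_mul, mul_one, aEl]
  split_ifs with hts
  · simp only [SetLike.val_smul, Matrix.smul_single, smul_eq_mul, mul_one]
  · simp [z.2 t s hts]

end PathAlgebra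

section Incidence

variable (k : Type) {P : Type} [Field k] [PartialOrder P] [DecidableEq P]

def diagUnit (x : P) : IncidenceAlgebra k P :=
  ⟨fun a b => if a = x ∧ b = x then 1 else 0, by
    rintro a b hab
    refine if_neg ?_
    rintro ⟨rfl, rfl⟩
    exact hab le_rfl⟩

theorem sum_diagUnit_eq_one [Fintype P] [LocallyFiniteOrder P] :
    ∑ x, diagUnit k x = (1 : IncidenceAlgebra k P) := by
  refine IncidenceAlgebra.ext fun a b _ => ?_
  simp only [IncidenceAlgebra.sum_apply, diagUnit, IncidenceAlgebra.coe_mk, ite_and,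
    Finset.sum_ite_eq, Finset.mem_univ, if_true, IncidenceAlgebra.one_apply, eq_comm]

variable [LocallyFiniteOrder P]

theorem diagUnit_mul_apply (x : P) (g : IncidenceAlgebra k P) (a b : P) :
    (diagUnit k x * g) a b = if a = x then g a b else 0 := by
  rw [IncidenceAlgebra.mul_apply]
  split
  · subst_vars
    by_cases hab : a ≤ b
    · simp [diagUnit, ite_and, hab]
    · simp [diagUnit, IncidenceAlgebra.apply_eq_zero_of_not_le hab]
  · simp [diagUnit, *]

theorem mul_diagUnit_apply (y : P) (g : IncidenceAlgebra k P) (a b : P) :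
    (g * diagUnit k y) a b = if b = y then g a b else 0 := by
  rw [IncidenceAlgebra.mul_apply]
  split
  · subst_vars
    by_cases hab : a ≤ b
    · simp [diagUnit, ite_and, hab]
    · simp [diagUnit, IncidenceAlgebra.apply_eq_zero_of_not_le hab]
  · simp [diagUnit, *]

theorem diagUnit_mul_mul_diagUnit_apply (x y : P) (g : IncidenceAlgebra k P) (a b : P) :
    (diagUnit k x * g * diagUnit k y) a b = if a = x ∧ b = y then g a b else 0 := by
  rw [mul_diagUnit_apply, diagUnit_mul_apply]
  by_cases ha : a = x <;> by_cases hb : b = y <;> simp [ha, hb]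

theorem diagUnit_mul_mul_diagUnit [DecidableLE P] (x y : P) (f : IncidenceAlgebra k P) :
    diagUnit k x * f * diagUnit k y =
      f x y • (diagUnit k x * IncidenceAlgebra.zeta k * diagUnit k y) := by
  refine IncidenceAlgebra.ext fun a b hab => ?_
  simp only [IncidenceAlgebra.constSMul_apply, diagUnit_mul_mul_diagUnit_apply]
  split_ifs with h
  · obtain ⟨rfl, rfl⟩ := h
    simp [IncidenceAlgebra.zeta_of_le hab]
  · simp

end Incidence

theorem statement18_general (k : Type) [Field k] :
    (∀ {n : ℕ} (Q : TreeQuiver n), Finite (TwoSidedIdeal ↥(pathAlg Q k))) ∧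
    (∀ (P : Type) [PartialOrder P] [Fintype P] [DecidableEq P] [LocallyFiniteOrder P],
      Finite (TwoSidedIdeal (IncidenceAlgebra k P))) := by
  refine ⟨fun Q => ?_, fun P _ _ _ _ => ?_⟩
  · exact TwoSidedIdeal.finite_of_peirce (k := k) (sum_e_eq_one Q k) (aEl Q k)
      fun t s z => Submodule.mem_span_singleton.mpr ⟨_, (e_mul_mul_e Q k z t s).symm⟩
  · classical
    exact TwoSidedIdeal.finite_of_peirce (k := k) (sum_diagUnit_eq_one k)
      (fun x y => diagUnit k x * IncidenceAlgebra.zeta k * diagUnit k y)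
      fun x y f => Submodule.mem_span_singleton.mpr ⟨_, (diagUnit_mul_mul_diagUnit k x y f).symm⟩

/-- STATEMENT 18: if `A` is the path algebra over `k` of a finite quiver whose
underlying graph is a tree, or the incidence algebra over `k` of a finite poset,
then `A` has only finitely many two-sided ideals. -/
theorem statement18 (k : Type) [Field k] [IsAlgClosed k] :
    (∀ {n : ℕ} (Q : TreeQuiver n), Finite (TwoSidedIdeal ↥(pathAlg Q k))) ∧
    (∀ (P : Type) [PartialOrder P] [Fintype P] [DecidableEq P] [LocallyFiniteOrder P],
      Finite (TwoSidedIdeal (IncidenceAlgebra k P))) :=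
  statement18_general k

end DPF
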